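/- For θ ∈ [-1, 0), the series ∑_{n≥1} J_n(θ)/n! converges (is finite), while for θ ≥ 0 it diverges, since J_n(θ) ≥ J_n(0) = (n-1)! for θ ≥ 0. -/

import Mathlib

open Polynomial MeasureTheory

/-- Mallows–Riordan polynomials `J n`, via the Kreweras recursion
`J (n+2) = ∑_{i=0}^n C(n,i) (1+θ+⋯+θ^i) J (i+1) J (n+1-i)`, `J 1 = 1`. -/
noncomputable def MRJ : ℕ → Polynomial ℚ
  | 0 => 0
  | 1 => 1
  | n + 2 =>
      ∑ i ∈ (Finset.range (n + 1)).attach,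
        (n.choose i.1 : Polynomial ℚ) * (∑ j ∈ Finset.range (i.1 + 1), X ^ j) *
          MRJ (i.1 + 1) * MRJ (n + 1 - i.1)
  decreasing_by
  · have := Finset.mem_range.mp i.2; omega
  · omega

/-!
Put `b n = J_{n+1}(θ) / n!`. The Kreweras recursion becomes
`(n + 1) b (n + 1) = ∑_{i ≤ n} [i + 1]_θ b i b (n - i)` with `[k]_θ = 1 + θ + ⋯ + θ^(k-1)`,
and the series is `∑ b n / (n + 1)`.

For `θ ≥ 0` all weights are `≥ 1`, so `b n ≥ 1` and the series dominates the harmonic series.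
For `-1 ≤ θ < 0` the weights lie in `[0, 1]` and their averages tend to `1 / (1 - θ) < 1`.
Hence `b n ≤ 1`, and since one of `i`, `n - i` is at least about `n / 2`, doubling the index
multiplies the bound on `b n` by a fixed `q < 1`: the dyadic blocks of the series are dominated
by a geometric series.
-/

open Finset

def qNat {R : Type*} [Semiring R] (x : R) (n : ℕ) : R := ∑ j ∈ range n, x ^ j

lemma qNat_mem_Icc {θ : ℝ} (h1 : -1 ≤ θ) (h0 : θ ≤ 0) (n : ℕ) : qNat θ n ∈ Set.Icc 0 1 := by
  induction n with
  | zero => simp [qNat]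
  | succ n ih =>
    obtain ⟨ih0, ih1⟩ := ih
    rw [qNat, geom_sum_succ, ← qNat]
    constructor <;> nlinarith

lemma one_le_qNat {θ : ℝ} (h0 : 0 ≤ θ) {n : ℕ} (hn : n ≠ 0) : 1 ≤ qNat θ n := by
  obtain ⟨m, rfl⟩ := Nat.exists_eq_succ_of_ne_zero hn
  rw [qNat, geom_sum_succ]
  have : 0 ≤ ∑ i ∈ range m, θ ^ i := sum_nonneg fun i _ => pow_nonneg h0 i
  nlinarith

lemma one_sub_mul_sum_qNat_succ {R : Type*} [CommRing R] (x : R) (m : ℕ) :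
    (1 - x) * ∑ i ∈ range m, qNat x (i + 1) = m + 1 - qNat x (m + 1) := by
  rw [mul_sum]
  simp_rw [qNat, mul_neg_geom_sum]
  rw [sum_sub_distrib, sum_range_succ' (fun i => x ^ i)]
  simp

lemma sum_qNat_succ_le {θ : ℝ} (h1 : -1 ≤ θ) (h0 : θ < 0) {N m : ℕ} (hN : 0 < N)
    (hm : N ≤ m + 1) :
    ∑ i ∈ range (m + 1), qNat θ (i + 1) ≤ (1 + 1 / N) / (1 - θ) * (m + 1) := by
  have hθ : 0 < 1 - θ := by linarith
  have hNm : (1 : ℝ) ≤ (m + 1) / N := by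
    rw [one_le_div (by exact_mod_cast hN)]; exact_mod_cast hm
  have hsum := one_sub_mul_sum_qNat_succ θ (m + 1)
  have hq := (qNat_mem_Icc h1 h0.le (m + 1 + 1)).1
  rw [div_mul_eq_mul_div, le_div_iff₀ hθ, mul_comm]
  push_cast at hsum
  calc (1 - θ) * ∑ i ∈ range (m + 1), qNat θ (i + 1) ≤ m + 2 := by linarith
    _ ≤ (1 + 1 / N) * (m + 1) := by rw [add_mul, one_div_mul_eq_div]; linarith

lemma aeval_MRJ_one {A : Type*} [CommSemiring A] [Algebra ℚ A] (x : A) :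
    aeval x (MRJ 1) = 1 := by
  simp [MRJ]

lemma aeval_MRJ_add_two {A : Type*} [CommSemiring A] [Algebra ℚ A] (x : A) (n : ℕ) :
    aeval x (MRJ (n + 2)) = ∑ i ∈ range (n + 1),
      n.choose i * qNat x (i + 1) * aeval x (MRJ (i + 1)) * aeval x (MRJ (n + 1 - i)) := by
  rw [MRJ, map_sum, ← sum_attach (range (n + 1))]
  simp [qNat, map_sum]

noncomputable def mrjScaled (θ : ℝ) (n : ℕ) : ℝ := aeval θ (MRJ (n + 1)) / n.factorial

lemma mrjScaled_zero (θ : ℝ) : mrjScaled θ 0 = 1 := by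
  simp [mrjScaled, aeval_MRJ_one]

lemma succ_mul_mrjScaled_succ (θ : ℝ) (n : ℕ) :
    (n + 1) * mrjScaled θ (n + 1) =
      ∑ i ∈ range (n + 1), qNat θ (i + 1) * mrjScaled θ i * mrjScaled θ (n - i) := by
  rw [mrjScaled, Nat.factorial_succ, Nat.cast_mul, aeval_MRJ_add_two, sum_div, mul_sum]
  refine sum_congr rfl fun i hi => ?_
  have hi : i ≤ n := Nat.lt_succ_iff.mp (mem_range.mp hi)
  rw [Nat.cast_choose ℝ hi, show n + 1 - i = n - i + 1 by omega, mrjScaled, mrjScaled]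
  field_simp
  push_cast
  ring

section SubConvolution

variable {b w : ℕ → ℝ}

lemma le_one_of_succ_mul_le_sum (hb : ∀ n, 0 ≤ b n) (hw1 : ∀ i, w i ≤ 1) (h0 : b 0 ≤ 1)
    (hrec : ∀ m, (m + 1) * b (m + 1) ≤ ∑ i ∈ range (m + 1), w i * b i * b (m - i)) :
    ∀ n, b n ≤ 1 := by
  intro n
  induction n using Nat.strong_induction_on with
  | _ n ih =>
    obtain _ | m := n
    · exact h0
    have hterm : ∀ i ∈ range (m + 1), w i * b i * b (m - i) ≤ 1 := fun i hi => by
      have hi := mem_range.mp hi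
      exact mul_le_one₀ (mul_le_one₀ (hw1 i) (hb i) (ih i (by omega))) (hb _) (ih _ (by omega))
    have hsum := (hrec m).trans (sum_le_card_nsmul _ _ _ hterm)
    rw [card_range, nsmul_one, Nat.cast_succ] at hsum
    exact (mul_le_iff_le_one_right (by positivity)).mp hsum

lemma le_pow_of_succ_mul_le_sum (hb : ∀ n, 0 ≤ b n) (hw : ∀ i, 0 ≤ w i) (hb1 : ∀ n, b n ≤ 1)
    (hrec : ∀ m, (m + 1) * b (m + 1) ≤ ∑ i ∈ range (m + 1), w i * b i * b (m - i))
    {q : ℝ} (hq : 0 ≤ q) {N : ℕ} (hN : 0 < N)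
    (hwsum : ∀ m, N ≤ m + 1 → ∑ i ∈ range (m + 1), w i ≤ q * (m + 1)) :
    ∀ k n, N * 2 ^ k ≤ n + 1 → b n ≤ q ^ k := by
  intro k
  induction k with
  | zero => simpa using fun n _ => hb1 n
  | succ k ih =>
    intro n hn
    have hNP : N ≤ N * 2 ^ k := Nat.le_mul_of_pos_right N (Nat.two_pow_pos k)
    rw [pow_succ, ← mul_assoc] at hn
    obtain ⟨m, rfl⟩ : ∃ m, n = m + 1 := ⟨n - 1, by omega⟩
    -- one of the indices `i`, `m - i` lies in the range where `ih` applies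
    have hprod : ∀ i ∈ range (m + 1), b i * b (m - i) ≤ q ^ k := fun i hi => by
      have hi := mem_range.mp hi
      rcases le_or_gt (N * 2 ^ k) (i + 1) with hbig | hsmall
      · simpa using mul_le_mul (ih i hbig) (hb1 (m - i)) (hb _) (pow_nonneg hq k)
      · simpa using mul_le_mul (hb1 i) (ih (m - i) (by omega)) (hb _) zero_le_one
    have hmain : (m + 1) * b (m + 1) ≤ (m + 1) * (q ^ k * q) := calc
      (m + 1) * b (m + 1) ≤ ∑ i ∈ range (m + 1), w i * b i * b (m - i) := hrec m
      _ ≤ ∑ i ∈ range (m + 1), w i * q ^ k := sum_le_sum fun i hi => by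
        rw [mul_assoc]; exact mul_le_mul_of_nonneg_left (hprod i hi) (hw i)
      _ = q ^ k * ∑ i ∈ range (m + 1), w i := by rw [mul_sum]; simp_rw [mul_comm]
      _ ≤ q ^ k * (q * (m + 1)) := mul_le_mul_of_nonneg_left (hwsum m (by omega)) (by positivity)
      _ = (m + 1) * (q ^ k * q) := by ring
    exact le_of_mul_le_mul_left hmain (by positivity)

end SubConvolution

lemma sum_Ico_div_succ_le {b : ℕ → ℝ} {a : ℕ} {β : ℝ} (hβ : 0 ≤ β)
    (hb : ∀ n ∈ Ico a (2 * a), b n ≤ β) : ∑ n ∈ Ico a (2 * a), b n / (n + 1) ≤ β := by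
  have ha : (0 : ℝ) < a + 1 := by positivity
  calc ∑ n ∈ Ico a (2 * a), b n / (n + 1)
      ≤ ∑ n ∈ Ico a (2 * a), β / (a + 1) := sum_le_sum fun n hn => by
        have : (a : ℝ) ≤ n := by exact_mod_cast (mem_Ico.mp hn).1
        exact div_le_div₀ hβ (hb n hn) ha (by linarith)
    _ = a * β / (a + 1) := by
        rw [sum_const, Nat.card_Ico, nsmul_eq_mul, show 2 * a - a = a by omega, mul_div_assoc]
    _ ≤ β := by rw [div_le_iff₀ ha]; nlinarith

lemma summable_of_sum_Ico_two_pow_le {f : ℕ → ℝ} (hf : ∀ n, 0 ≤ f n) {N : ℕ} (hN : 0 < N)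
    {q : ℝ} (hq0 : 0 ≤ q) (hq1 : q < 1)
    (hblock : ∀ k, ∑ n ∈ Ico (N * 2 ^ k) (N * 2 ^ (k + 1)), f n ≤ q ^ k) : Summable f := by
  have hpartial :
      ∀ K, ∑ n ∈ range (N * 2 ^ K), f n ≤ ∑ n ∈ range N, f n + ∑ k ∈ range K, q ^ k := by
    intro K
    induction K with
    | zero => simp
    | succ K ih =>
      have hmono : N * 2 ^ K ≤ N * 2 ^ (K + 1) :=
        Nat.mul_le_mul_left N (Nat.pow_le_pow_right two_pos K.le_succ)
      rw [← sum_range_add_sum_Ico _ hmono, sum_range_succ]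
      linarith [hblock K]
  refine summable_of_sum_range_le hf (c := ∑ n ∈ range N, f n + ∑' k, q ^ k) fun K => ?_
  have hK : K ≤ N * 2 ^ K := (Nat.lt_two_pow_self).le.trans (Nat.le_mul_of_pos_left _ hN)
  calc ∑ n ∈ range K, f n ≤ ∑ n ∈ range (N * 2 ^ K), f n :=
        sum_le_sum_of_subset_of_nonneg (range_subset_range.mpr hK) fun n _ _ => hf n
    _ ≤ ∑ n ∈ range N, f n + ∑ k ∈ range K, q ^ k := hpartial K
    _ ≤ ∑ n ∈ range N, f n + ∑' k, q ^ k := by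
        gcongr
        exact (summable_geometric_of_lt_one hq0 hq1).sum_le_tsum _ fun k _ => pow_nonneg hq0 k

lemma summable_div_succ_of_le_pow {b : ℕ → ℝ} (hb : ∀ n, 0 ≤ b n) {q : ℝ} (hq0 : 0 ≤ q)
    (hq1 : q < 1) {N : ℕ} (hN : 0 < N) (hdecay : ∀ k n, N * 2 ^ k ≤ n + 1 → b n ≤ q ^ k) :
    Summable fun n : ℕ => b n / (n + 1) := by
  refine summable_of_sum_Ico_two_pow_le (fun n => div_nonneg (hb n) n.cast_add_one_pos.le) hN
    hq0 hq1 fun k => ?_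
  rw [pow_succ, ← mul_assoc, mul_comm _ 2]
  exact sum_Ico_div_succ_le (pow_nonneg hq0 k) fun n hn => hdecay k n (by
    have := (mem_Ico.mp hn).1; omega)

lemma mrjScaled_nonneg {θ : ℝ} (h1 : -1 ≤ θ) (h0 : θ ≤ 0) (n : ℕ) : 0 ≤ mrjScaled θ n := by
  induction n using Nat.strong_induction_on with
  | _ n ih =>
    obtain _ | m := n
    · simp [mrjScaled_zero]
    have hsum : 0 ≤ (m + 1) * mrjScaled θ (m + 1) := by
      rw [succ_mul_mrjScaled_succ]
      refine sum_nonneg fun i hi => ?_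
      have hi := mem_range.mp hi
      have := (qNat_mem_Icc h1 h0 (i + 1)).1
      have := ih i (by omega)
      have := ih (m - i) (by omega)
      positivity
    exact (mul_nonneg_iff_of_pos_left (by positivity)).mp hsum

lemma one_le_mrjScaled {θ : ℝ} (h0 : 0 ≤ θ) (n : ℕ) : 1 ≤ mrjScaled θ n := by
  induction n using Nat.strong_induction_on with
  | _ n ih =>
    obtain _ | m := n
    · simp [mrjScaled_zero]
    have hsum : (m + 1) * 1 ≤ (m + 1) * mrjScaled θ (m + 1) := by
      rw [succ_mul_mrjScaled_succ]
      refine le_trans ?_ (card_nsmul_le_sum _ _ 1 fun i hi => ?_)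
      · simp
      have hi := mem_range.mp hi
      exact one_le_mul_of_one_le_of_one_le
        (one_le_mul_of_one_le_of_one_le (one_le_qNat h0 i.succ_ne_zero) (ih i (by omega)))
        (ih (m - i) (by omega))
    exact le_of_mul_le_mul_left hsum (by positivity)

lemma not_summable_mrjScaled_div {θ : ℝ} (h0 : 0 ≤ θ) :
    ¬Summable fun n : ℕ => mrjScaled θ n / (n + 1) := fun h => by
  have hharmonic : Summable fun n : ℕ => 1 / ((n : ℝ) + 1) :=
    h.of_nonneg_of_le (fun n => by positivity)
      fun n => div_le_div_of_nonneg_right (one_le_mrjScaled h0 n) (by positivity)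
  refine Real.not_summable_one_div_natCast ((summable_nat_add_iff 1).mp ?_)
  exact_mod_cast hharmonic

lemma summable_mrjScaled_div {θ : ℝ} (h1 : -1 ≤ θ) (h0 : θ < 0) :
    Summable fun n : ℕ => mrjScaled θ n / (n + 1) := by
  have hb := mrjScaled_nonneg h1 h0.le
  have hw := fun i => qNat_mem_Icc h1 h0.le (i + 1)
  have hrec := fun m => (succ_mul_mrjScaled_succ θ m).le
  have hb1 := le_one_of_succ_mul_le_sum hb (fun i => (hw i).2) (mrjScaled_zero θ).le hrec
  obtain ⟨N, hN⟩ := exists_nat_one_div_lt (neg_pos.mpr h0)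
  set q : ℝ := (1 + 1 / ((N + 1 : ℕ) : ℝ)) / (1 - θ)
  have hq0 : 0 ≤ q := div_nonneg (by positivity) (by linarith)
  have hq1 : q < 1 := by
    rw [div_lt_one (by linarith)]; push_cast; linarith
  exact summable_div_succ_of_le_pow hb hq0 hq1 N.succ_pos
    (le_pow_of_succ_mul_le_sum hb (fun i => (hw i).1) hb1 hrec hq0 N.succ_pos
      fun m hm => sum_qNat_succ_le h1 h0 N.succ_pos hm)

theorem MRJ_summable_iff (θ : ℝ) (hθ : -1 ≤ θ) :
    Summable (fun n : ℕ => (Polynomial.aeval θ (MRJ (n + 1)) : ℝ) / (n + 1).factorial)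
      ↔ θ < 0 := by
  have hterm : (fun n : ℕ => (aeval θ (MRJ (n + 1)) : ℝ) / (n + 1).factorial) =
      fun n : ℕ => mrjScaled θ n / (n + 1) := by
    funext n
    rw [mrjScaled, Nat.factorial_succ, Nat.cast_mul, div_div, mul_comm]
    push_cast; ring
  rw [hterm]
  exact ⟨fun h => not_le.mp fun h0 => not_summable_mrjScaled_div h0 h, summable_mrjScaled_div hθ⟩
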